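/- Let i : B → C be an injective complete homomorphism of complete Boolean algebras and π its adjoint. If π preserves complements (i.e., π(¬c) = ¬π(c) for all c ∈ C), then i is surjective. -/

import Mathlib

theorem le_map_sInf_setOf_le {B C : Type*} [CompleteLattice B] [CompleteLattice C] (i : B → C)
    (hinf : ∀ S : Set B, i (sInf S) = sInf (i '' S)) (c : C) :
    c ≤ i (sInf {b : B | c ≤ i b}) := by
  rw [hinf]
  exact le_sInf (by rintro _ ⟨b, hb, rfl⟩; exact hb)

theorem adjoint_compl_surjective_general {B C : Type*} [CompleteBooleanAlgebra B] [CompleteBooleanAlgebra C]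
    (i : B → C)
    (hinf : ∀ S : Set B, i (sInf S) = sInf (i '' S))
    (hcompl : ∀ b : B, i bᶜ = (i b)ᶜ)
    (hπ : ∀ c : C, sInf {b : B | cᶜ ≤ i b} = (sInf {b : B | c ≤ i b})ᶜ) :
    Function.Surjective i := by
  intro c
  refine ⟨sInf {b : B | c ≤ i b}, le_antisymm ?_ (le_map_sInf_setOf_le i hinf c)⟩
  -- `cᶜ ≤ i (π cᶜ) = i (π c)ᶜ = (i (π c))ᶜ`, so `i (π c) ≤ c`.
  have hcompl_le : cᶜ ≤ (i (sInf {b : B | c ≤ i b}))ᶜ := by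
    simpa only [hπ c, hcompl] using le_map_sInf_setOf_le i hinf cᶜ
  exact compl_le_compl_iff_le.mp hcompl_le

/-- If the adjoint preserves complements then `i` is surjective. -/
theorem adjoint_compl_surjective {B C : Type*} [CompleteBooleanAlgebra B] [CompleteBooleanAlgebra C]
    (i : B → C) (hinj : Function.Injective i)
    (hsup : ∀ S : Set B, i (sSup S) = sSup (i '' S))
    (hinf : ∀ S : Set B, i (sInf S) = sInf (i '' S))
    (hcompl : ∀ b : B, i bᶜ = (i b)ᶜ)
    (hπ : ∀ c : C, sInf {b : B | cᶜ ≤ i b} = (sInf {b : B | c ≤ i b})ᶜ) :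
    Function.Surjective i :=
  adjoint_compl_surjective_general i hinf hcompl hπ
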